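/- arXiv:2105.07435 — 7 statements merged into one kernel-verified Lean document; each statement's English description precedes it below -/
import Mathlib

section
/- For any positive integer k, the set of pairs of integers (m,n) with gcd(m,n)=1, mn(m+n) ≠ 0, and m^6 + 2m^5n + 4m^4n^2 + 8m^3n^3 + 9m^2n^4 + 4mn^5 + n^6 = k is finite. -/
theorem A_eq_k_finite (k : ℕ) (hk : 0 < k) :
    {p : ℤ × ℤ | IsCoprime p.1 p.2 ∧ p.1*p.2*(p.1+p.2) ≠ 0 ∧
      p.1^6 + 2*p.1^5*p.2 + 4*p.1^4*p.2^2 + 8*p.1^3*p.2^3 + 9*p.1^2*p.2^4 +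
        4*p.1*p.2^5 + p.2^6 = (k : ℤ)}.Finite := by
  apply Set.Finite.subset (Set.finite_Icc ((-(k:ℤ), -(k:ℤ))) ((k:ℤ), (k:ℤ)))
  rintro ⟨m, n⟩ ⟨-, hz, hA⟩
  simp only at hz hA
  have hm : m ≠ 0 := fun h => hz (by simp [h])
  have hn : n ≠ 0 := fun h => hz (by simp [h])
  have hmn : m + n ≠ 0 := fun h => hz (by simp [h])
  -- identity: A = (m^3+m^2n-2mn^2-n^3)^2 + 7(mn(m+n))^2
  have hid : (m^3 + m^2*n - 2*m*n^2 - n^3)^2 + 7*(m*n*(m+n))^2 = (k:ℤ) := by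
    ring_nf
    ring_nf at hA
    linarith
  have h7 : (m*n*(m+n))^2 ≤ (k:ℤ) := by nlinarith [sq_nonneg (m^3 + m^2*n - 2*m*n^2 - n^3), sq_nonneg (m*n*(m+n))]
  have h1n : (1:ℤ) ≤ (n*(m+n))^2 := by
    have : (0:ℤ) < (n*(m+n))^2 := by positivity
    omega
  have h1m : (1:ℤ) ≤ (m*(m+n))^2 := by
    have : (0:ℤ) < (m*(m+n))^2 := by positivity
    omega
  have hm2 : m^2 ≤ (k:ℤ) := by nlinarith [sq_nonneg m, sq_nonneg (m*n*(m+n))]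
  have hn2 : n^2 ≤ (k:ℤ) := by nlinarith [sq_nonneg n, sq_nonneg (m*n*(m+n))]
  have hk1 : (1:ℤ) ≤ (k:ℤ) := by exact_mod_cast hk
  constructor <;> constructor <;> simp only <;> nlinarith [sq_nonneg (m-1), sq_nonneg (m+1), sq_nonneg (n-1), sq_nonneg (n+1)]
end

section
/- If p is a prime dividing A(m,n) = m^6 + 2m^5n + 4m^4n^2 + 8m^3n^3 + 9m^2n^4 + 4mn^5 + n^6 for some coprime integers m, n, and p ≠ 7, then p ≡ 1 (mod 7). -/
theorem prime_divisor_of_A (p : ℕ) (hp : p.Prime) (hp7 : p ≠ 7) (m n : ℤ)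
    (h : IsCoprime m n)
    (hdvd : (p : ℤ) ∣ m^6 + 2*m^5*n + 4*m^4*n^2 + 8*m^3*n^3 + 9*m^2*n^4 + 4*m*n^5 + n^6) :
    p % 7 = 1 := by
  have hp2 : p ≠ 2 := by
    intro h2
    subst h2
    obtain ⟨a, b, hab⟩ := h
    have hA2 : (m : ZMod 2)^6 + 2*(m : ZMod 2)^5*(n : ZMod 2) + 4*(m : ZMod 2)^4*(n : ZMod 2)^2 +
        8*(m : ZMod 2)^3*(n : ZMod 2)^3 + 9*(m : ZMod 2)^2*(n : ZMod 2)^4 +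
        4*(m : ZMod 2)*(n : ZMod 2)^5 + (n : ZMod 2)^6 = 0 := by
      have := (ZMod.intCast_zmod_eq_zero_iff_dvd _ 2).mpr hdvd
      push_cast at this
      exact this
    have hcop2 : (a : ZMod 2) * (m : ZMod 2) + (b : ZMod 2) * (n : ZMod 2) = 1 := by
      have := congrArg (fun z : ℤ => (z : ZMod 2)) hab
      push_cast at this
      exact this
    have hall : ∀ x : ZMod 2, x = 0 ∨ x = 1 := by decide
    rcases hall (m : ZMod 2) with h1 | h1 <;> rcases hall (n : ZMod 2) with h2' | h2' <;>
        rw [h1, h2'] at hA2 hcop2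
    · simp at hcop2
    all_goals revert hA2; decide
  haveI hpf : Fact p.Prime := ⟨hp⟩
  set M : ZMod p := (m : ZMod p) with hM
  set N : ZMod p := (n : ZMod p) with hNdef
  -- the relation mod p
  have hA : M^6 + 2*M^5*N + 4*M^4*N^2 + 8*M^3*N^3 + 9*M^2*N^4 + 4*M*N^5 + N^6 = 0 := by
    have := (ZMod.intCast_zmod_eq_zero_iff_dvd _ p).mpr hdvd
    push_cast at this
    exact this
  -- coprimality mod p
  obtain ⟨a, b, hab⟩ := h
  have hcop : (a : ZMod p) * M + (b : ZMod p) * N = 1 := by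
    have := congrArg (fun z : ℤ => (z : ZMod p)) hab
    push_cast at this
    exact this
  -- N ≠ 0
  have hN : N ≠ 0 := by
    intro h0
    rw [h0] at hA
    simp only [mul_zero, zero_pow, ne_eq, OfNat.ofNat_ne_zero, not_false_eq_true,
      mul_one, add_zero, zero_mul] at hA
    have hM0 : M = 0 := by
      have : M ^ 6 = 0 := by linear_combination hA
      exact pow_eq_zero_iff (by norm_num) |>.mp this
    rw [hM0, h0] at hcop
    simp at hcop
  -- p ≠ 2
  have h2K : (2 : ZMod p) ≠ 0 := by
    intro h0
    have : (p : ℕ) ∣ 2 := by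
      have : ((2 : ℤ) : ZMod p) = 0 := by exact_mod_cast h0
      exact_mod_cast (ZMod.intCast_zmod_eq_zero_iff_dvd 2 p).mp this
    exact hp2 ((Nat.prime_dvd_prime_iff_eq hp Nat.prime_two).mp this)
  have hD : (2 : ZMod p) * N ^ 4 ≠ 0 := by
    exact mul_ne_zero h2K (pow_ne_zero _ hN)
  -- the 7th root of unity
  set y : ZMod p := (-(M^4 + M^3*N + 3*M^2*N^2 + 4*M*N^3 + 3*N^4)) / (2 * N^4) with hy
  have hyD : y * (2 * N^4) = -(M^4 + M^3*N + 3*M^2*N^2 + 4*M*N^3 + 3*N^4) :=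
    div_mul_cancel₀ _ hD
  have hPhi6 : (1 + y + y^2 + y^3 + y^4 + y^5 + y^6) * (2*N^4)^6 = 0 := by
    linear_combination ((2*N^4)^5 * ((y*(2*N^4))^0 * (-(M^4 + M^3*N + 3*M^2*N^2 + 4*M*N^3 + 3*N^4))^0) +
      (2*N^4)^4 * ((y*(2*N^4))^0 * (-(M^4 + M^3*N + 3*M^2*N^2 + 4*M*N^3 + 3*N^4))^1 + (y*(2*N^4))^1 * (-(M^4 + M^3*N + 3*M^2*N^2 + 4*M*N^3 + 3*N^4))^0) +
      (2*N^4)^3 * ((y*(2*N^4))^0 * (-(M^4 + M^3*N + 3*M^2*N^2 + 4*M*N^3 + 3*N^4))^2 + (y*(2*N^4))^1 * (-(M^4 + M^3*N + 3*M^2*N^2 + 4*M*N^3 + 3*N^4))^1 + (y*(2*N^4))^2 * (-(M^4 + M^3*N + 3*M^2*N^2 + 4*M*N^3 + 3*N^4))^0) +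
      (2*N^4)^2 * ((y*(2*N^4))^0 * (-(M^4 + M^3*N + 3*M^2*N^2 + 4*M*N^3 + 3*N^4))^3 + (y*(2*N^4))^1 * (-(M^4 + M^3*N + 3*M^2*N^2 + 4*M*N^3 + 3*N^4))^2 + (y*(2*N^4))^2 * (-(M^4 + M^3*N + 3*M^2*N^2 + 4*M*N^3 + 3*N^4))^1 + (y*(2*N^4))^3 * (-(M^4 + M^3*N + 3*M^2*N^2 + 4*M*N^3 + 3*N^4))^0) +
      (2*N^4)^1 * ((y*(2*N^4))^0 * (-(M^4 + M^3*N + 3*M^2*N^2 + 4*M*N^3 + 3*N^4))^4 + (y*(2*N^4))^1 * (-(M^4 + M^3*N + 3*M^2*N^2 + 4*M*N^3 + 3*N^4))^3 + (y*(2*N^4))^2 * (-(M^4 + M^3*N + 3*M^2*N^2 + 4*M*N^3 + 3*N^4))^2 + (y*(2*N^4))^3 * (-(M^4 + M^3*N + 3*M^2*N^2 + 4*M*N^3 + 3*N^4))^1 + (y*(2*N^4))^4 * (-(M^4 + M^3*N + 3*M^2*N^2 + 4*M*N^3 + 3*N^4))^0) +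
      (2*N^4)^0 * ((y*(2*N^4))^0 * (-(M^4 + M^3*N + 3*M^2*N^2 + 4*M*N^3 + 3*N^4))^5 + (y*(2*N^4))^1 * (-(M^4 + M^3*N + 3*M^2*N^2 + 4*M*N^3 + 3*N^4))^4 + (y*(2*N^4))^2 * (-(M^4 + M^3*N + 3*M^2*N^2 + 4*M*N^3 + 3*N^4))^3 + (y*(2*N^4))^3 * (-(M^4 + M^3*N + 3*M^2*N^2 + 4*M*N^3 + 3*N^4))^2 + (y*(2*N^4))^4 * (-(M^4 + M^3*N + 3*M^2*N^2 + 4*M*N^3 + 3*N^4))^1 + (y*(2*N^4))^5 * (-(M^4 + M^3*N + 3*M^2*N^2 + 4*M*N^3 + 3*N^4))^0)) * hyD + (463*N^18 + 1860*M*N^17 + 4537*M^2*N^16 + 7976*M^3*N^15 +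
      11158*M^4*N^14 + 13108*M^5*N^13 + 13268*M^6*N^12 + 11772*M^7*N^11 +
      9259*M^8*N^10 + 6496*M^9*N^9 + 4089*M^10*N^8 + 2296*M^11*N^7 +
      1159*M^12*N^6 + 516*M^13*N^5 + 205*M^14*N^4 + 68*M^15*N^3 +
      21*M^16*N^2 + 4*M^17*N + M^18) * hA
  have hPhi : 1 + y + y^2 + y^3 + y^4 + y^5 + y^6 = 0 := by
    rcases mul_eq_zero.mp hPhi6 with h0 | h0
    · exact h0
    · exact absurd h0 (pow_ne_zero 6 hD)
  have hy7 : y ^ 7 = 1 := by linear_combination (y - 1) * hPhi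
  have hy1 : y ≠ 1 := by
    intro h1
    rw [h1] at hPhi
    norm_num at hPhi
    have h7 : (p : ℕ) ∣ 7 := by
      have : ((7 : ℤ) : ZMod p) = 0 := by exact_mod_cast hPhi
      exact_mod_cast (ZMod.intCast_zmod_eq_zero_iff_dvd 7 p).mp this
    exact hp7 ((Nat.prime_dvd_prime_iff_eq hp (by norm_num)).mp h7)
  have hy0 : y ≠ 0 := by
    intro h0
    rw [h0] at hy7
    simp at hy7
  haveI : Fact (Nat.Prime 7) := ⟨by norm_num⟩
  have horder : orderOf y = 7 := orderOf_eq_prime hy7 hy1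
  have hpow : y ^ (p - 1) = 1 := ZMod.pow_card_sub_one_eq_one hy0
  have hdvd7 : 7 ∣ p - 1 := horder ▸ orderOf_dvd_of_pow_eq_one hpow
  have h2le : 2 ≤ p := hp.two_le
  omega
end

section
/- If m, n are coprime integers then A(m,n) = m^6 + 2m^5n + 4m^4n^2 + 8m^3n^3 + 9m^2n^4 + 4mn^5 + n^6 is not divisible by 49. -/
lemma key7 : ∀ a b : ZMod 7,
    a^3 + a^2*b - 2*a*b^2 - b^3 = 0 → a*b*(a+b) = 0 → a = 0 ∧ b = 0 := by decide

theorem A_not_div_49 (m n : ℤ) (h : IsCoprime m n) :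
    ¬ (49 : ℤ) ∣ m^6 + 2*m^5*n + 4*m^4*n^2 + 8*m^3*n^3 + 9*m^2*n^4 + 4*m*n^5 + n^6 := by
  intro hd
  set x : ℤ := m^3 + m^2*n - 2*m*n^2 - n^3 with hx
  set y : ℤ := m*n*(m+n) with hy
  have hA : m^6 + 2*m^5*n + 4*m^4*n^2 + 8*m^3*n^3 + 9*m^2*n^4 + 4*m*n^5 + n^6
      = x^2 + 7*y^2 := by rw [hx, hy]; ring
  rw [hA] at hd
  have hp7 : Prime (7 : ℤ) := by norm_num
  have h7A : (7:ℤ) ∣ x^2 + 7*y^2 := dvd_trans (by norm_num) hd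
  have h7x2 : (7:ℤ) ∣ x^2 := (dvd_add_right ⟨y^2, rfl⟩).mp (by rwa [add_comm] at h7A)
  have h7x : (7:ℤ) ∣ x := hp7.dvd_of_dvd_pow h7x2
  have h49x2 : (49:ℤ) ∣ x^2 := by
    obtain ⟨c, hc⟩ := h7x
    exact ⟨c^2, by rw [hc]; ring⟩
  have h7y2 : (49:ℤ) ∣ 7*y^2 := (dvd_add_right h49x2).mp hd
  have h7y : (7:ℤ) ∣ y := by
    obtain ⟨c, hc⟩ := h7y2
    exact hp7.dvd_of_dvd_pow (n := 2) ⟨c, by linarith⟩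
  have hxz : ((m:ZMod 7))^3 + (m:ZMod 7)^2*(n:ZMod 7) - 2*(m:ZMod 7)*(n:ZMod 7)^2 - (n:ZMod 7)^3 = 0 := by
    have : ((x : ℤ) : ZMod 7) = 0 := (ZMod.intCast_zmod_eq_zero_iff_dvd x 7).mpr h7x
    rw [hx] at this; push_cast at this; linear_combination this
  have hyz : (m:ZMod 7)*(n:ZMod 7)*((m:ZMod 7)+(n:ZMod 7)) = 0 := by
    have : ((y : ℤ) : ZMod 7) = 0 := (ZMod.intCast_zmod_eq_zero_iff_dvd y 7).mpr h7y
    rw [hy] at this; push_cast at this; linear_combination this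
  obtain ⟨hm, hn⟩ := key7 _ _ hxz hyz
  have h7m : (7:ℤ) ∣ m := (ZMod.intCast_zmod_eq_zero_iff_dvd m 7).mp hm
  have h7n : (7:ℤ) ∣ n := (ZMod.intCast_zmod_eq_zero_iff_dvd n 7).mp hn
  exact hp7.not_unit (h.isUnit_of_dvd' h7m h7n)
end

section
/- The smallest value of A(m,n) = m^6 + 2m^5n + 4m^4n^2 + 8m^3n^3 + 9m^2n^4 + 4mn^5 + n^6 over pairs of coprime integers (m,n) with mn(m+n) ≠ 0 is 29, attained e.g. at (m,n) = (1,1). -/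
lemma form_bound (m n : ℤ) :
    m^6 + n^6 ≤ 4*(m^6 + 2*m^5*n + 4*m^4*n^2 + 8*m^3*n^3 + 9*m^2*n^4 + 4*m*n^5 + n^6) := by
  nlinarith [sq_nonneg (m+n), sq_nonneg (m-n), sq_nonneg (m^2+m*n+n^2), sq_nonneg (m^3+2*m^2*n+2*m*n^2), sq_nonneg (m^3+m^2*n), sq_nonneg (m^2*n+m*n^2), sq_nonneg (m*n^2+n^3), sq_nonneg (m^3+2*m^2*n+3*m*n^2+n^3), sq_nonneg (m*n*(m+n)), sq_nonneg (m^3+3*m^2*n+3*m*n^2+n^3)]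

theorem A_min_29 :
    (∀ m n : ℤ, IsCoprime m n → m*n*(m+n) ≠ 0 →
      (29 : ℤ) ≤ m^6 + 2*m^5*n + 4*m^4*n^2 + 8*m^3*n^3 + 9*m^2*n^4 + 4*m*n^5 + n^6) ∧
    (1:ℤ)^6 + 2*1^5*1 + 4*1^4*1^2 + 8*1^3*1^3 + 9*1^2*1^4 + 4*1*1^5 + 1^6 = 29 := by
  constructor
  · intro m n hcop hne
    rw [Int.isCoprime_iff_gcd_eq_one] at hcop
    by_cases hm : -2 ≤ m ∧ m ≤ 2 ∧ -2 ≤ n ∧ n ≤ 2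
    · obtain ⟨h1, h2, h3, h4⟩ := hm
      interval_cases m <;> interval_cases n <;> simp_all
    · have hbig : (729 : ℤ) ≤ m^6 + n^6 := by
        have hbig2 : (3 ≤ m ∨ m ≤ -3) ∨ (3 ≤ n ∨ n ≤ -3) := by
          push_neg at hm; omega
        have h6 : ∀ k : ℤ, (3 ≤ k ∨ k ≤ -3) → (729:ℤ) ≤ k^6 := by
          intro k hk
          have h3 : 3 ≤ |k| := by
            rcases hk with h | h
            · rw [abs_of_nonneg (by omega)]; exact h
            · rw [abs_of_nonpos (by omega)]; omega
          calc (729:ℤ) = 3^6 := by norm_num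
          _ ≤ |k|^6 := pow_le_pow_left₀ (by norm_num) h3 6
          _ = k^6 := by rw [← abs_pow]; exact abs_of_nonneg (by positivity)
        rcases hbig2 with h | h
        · nlinarith [h6 m h, sq_nonneg (n^3)]
        · nlinarith [h6 n h, sq_nonneg (m^3)]
      have := form_bound m n
      linarith
  · norm_num
end

section
/- For all integers m, n: the resultant identity Res_m(t_1(m,n), t_2(m,n)) = -8n^9 holds, where t_1(m,n) = m^3+2m^2n+mn^2+n^3 and t_2(m,n) = m^3-mn^2-n^3; consequently, if gcd(m,n)=1 and p is an odd prime, p cannot divide both t_1(m,n) and t_2(m,n). -/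
/-!
The determinant is a direct Laplace expansion. For the divisibility statement, the resultant
lies in the ideal generated by `t₁` and `t₂`; in fact already `2 n⁵` and `2 m⁵` do, by the
Bézout identities
  `(m² - 2n²) t₁ - (m² + 2mn) t₂ = -2 n⁵`  and  `n² t₁ + (2m² + n²) t₂ = 2 m⁵`.
Hence an odd prime dividing both `t₁` and `t₂` divides `m` and `n`.
-/

theorem det_sylvester_t1_t2 {R : Type*} [CommRing R] (n : R) :
    Matrix.det !![1, 2*n, n^2, n^3, 0, 0;
                  0, 1, 2*n, n^2, n^3, 0;
                  0, 0, 1, 2*n, n^2, n^3;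
                  1, 0, -n^2, -n^3, 0, 0;
                  0, 1, 0, -n^2, -n^3, 0;
                  0, 0, 1, 0, -n^2, -n^3] = -8*n^9 := by
  simp [Matrix.det_succ_row_zero, Fin.sum_univ_succ, Fin.succAbove]
  ring

theorem dvd_two_mul_pow_five_of_dvd_t1_t2 {R : Type*} [CommRing R] {p m n : R}
    (h₁ : p ∣ m^3 + 2*m^2*n + m*n^2 + n^3) (h₂ : p ∣ m^3 - m*n^2 - n^3) :
    p ∣ 2 * n^5 ∧ p ∣ 2 * m^5 := by
  have bezout_n : (m^2 - 2*n^2) * (m^3 + 2*m^2*n + m*n^2 + n^3)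
      + (-(m^2 + 2*m*n)) * (m^3 - m*n^2 - n^3) = -(2 * n^5) := by ring
  have bezout_m : n^2 * (m^3 + 2*m^2*n + m*n^2 + n^3)
      + (2*m^2 + n^2) * (m^3 - m*n^2 - n^3) = 2 * m^5 := by ring
  refine ⟨?_, ?_⟩
  · rw [← dvd_neg, ← bezout_n]
    exact h₁.linear_comb h₂ _ _
  · rw [← bezout_m]
    exact h₁.linear_comb h₂ _ _

theorem Prime.dvd_of_isCoprime_of_dvd_mul_pow {R : Type*} [CommSemiring R] {p c a : R} {k : ℕ}
    (hp : Prime p) (hc : IsCoprime p c) (h : p ∣ c * a^k) : p ∣ a :=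
  hp.dvd_of_dvd_pow (hc.dvd_of_dvd_mul_left h)

theorem resultant_t1_t2 (m n : ℤ) :
    (Matrix.det !![1, 2*n, n^2, n^3, 0, 0;
                   0, 1, 2*n, n^2, n^3, 0;
                   0, 0, 1, 2*n, n^2, n^3;
                   1, 0, -n^2, -n^3, 0, 0;
                   0, 1, 0, -n^2, -n^3, 0;
                   0, 0, 1, 0, -n^2, -n^3] = -8*n^9) ∧
    (∀ p : ℤ, Prime p → Odd p → IsCoprime m n →
      ¬ (p ∣ m^3 + 2*m^2*n + m*n^2 + n^3 ∧ p ∣ m^3 - m*n^2 - n^3)) := by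
  refine ⟨det_sylvester_t1_t2 n, fun p hp hodd hmn ⟨h₁, h₂⟩ => ?_⟩
  have hp2 : IsCoprime p 2 := Int.isCoprime_two_right.mpr hodd
  obtain ⟨hn, hm⟩ := dvd_two_mul_pow_five_of_dvd_t1_t2 h₁ h₂
  exact hp.not_isUnit <| hmn.isUnit_of_dvd'
    (hp.dvd_of_isCoprime_of_dvd_mul_pow hp2 hm) (hp.dvd_of_isCoprime_of_dvd_mul_pow hp2 hn)
end

section
/- If p is an odd prime dividing t_i(m,n) for some i ∈ {1,2,3} and coprime integers m, n with mn(m+n) ≠ 0, and c = -A(m,n)/B(m,n), then the numerator of c^3 + 2c^2 + c + 1 is divisible by p. -/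
theorem prime_div_numerator (p : ℕ) (hp : p.Prime) (hodd : Odd p) (m n : ℤ)
    (hcop : IsCoprime m n) (h0 : m*n*(m+n) ≠ 0)
    (hdvd : (p : ℤ) ∣ m^3 + 2*m^2*n + m*n^2 + n^3 ∨
            (p : ℤ) ∣ m^3 - m*n^2 - n^3 ∨
            (p : ℤ) ∣ m^3 + 2*m^2*n + 3*m*n^2 + n^3) :
    (p : ℤ) ∣ (let c : ℚ := -((m^6 + 2*m^5*n + 4*m^4*n^2 + 8*m^3*n^3 + 9*m^2*n^4 +
        4*m*n^5 + n^6 : ℤ) / (4*m^2*n^2*(m+n)^2 : ℤ));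
      (c^3 + 2*c^2 + c + 1).num) := by
  have hpZ : Prime (p : ℤ) := Nat.prime_iff_prime_int.mp hp
  have hp2 : ¬ (p : ℤ) ∣ 2 := by
    intro h
    have h2 : p ∣ 2 := by exact_mod_cast h
    have := (Nat.prime_dvd_prime_iff_eq hp Nat.prime_two).mp h2
    rw [this] at hodd
    exact (Nat.not_odd_iff_even.mpr (by norm_num)) hodd
  -- integer abbreviations
  set A : ℤ := m^6 + 2*m^5*n + 4*m^4*n^2 + 8*m^3*n^3 + 9*m^2*n^4 + 4*m*n^5 + n^6 with hA
  set B : ℤ := 4*m^2*n^2*(m+n)^2 with hB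
  set N : ℤ := -A^3 + 2*A^2*B - A*B^2 + B^3 with hN
  -- p does not divide m, n, m+n
  have contra : ¬ ((p:ℤ) ∣ m ∧ (p:ℤ) ∣ n) := by
    rintro ⟨h1, h2⟩
    exact hpZ.not_unit (hcop.isUnit_of_dvd' h1 h2)
  have hm : ¬ (p:ℤ) ∣ m := by
    intro hm
    apply contra
    refine ⟨hm, hpZ.dvd_of_dvd_pow (n := 3) ?_⟩
    rcases hdvd with h | h | h
    · have : n^3 = (m^3 + 2*m^2*n + m*n^2 + n^3) - m*(m^2+2*m*n+n^2) := by ring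
      rw [this]; exact dvd_sub h (hm.mul_right _)
    · have : n^3 = -(m^3 - m*n^2 - n^3) + m*(m^2-n^2) := by ring
      rw [this]; exact dvd_add h.neg_right (hm.mul_right _)
    · have : n^3 = (m^3 + 2*m^2*n + 3*m*n^2 + n^3) - m*(m^2+2*m*n+3*n^2) := by ring
      rw [this]; exact dvd_sub h (hm.mul_right _)
  have hn : ¬ (p:ℤ) ∣ n := by
    intro hn
    apply contra
    refine ⟨hpZ.dvd_of_dvd_pow (n := 3) ?_, hn⟩
    rcases hdvd with h | h | h
    · have : m^3 = (m^3 + 2*m^2*n + m*n^2 + n^3) - n*(2*m^2+m*n+n^2) := by ring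
      rw [this]; exact dvd_sub h (hn.mul_right _)
    · have : m^3 = (m^3 - m*n^2 - n^3) + n*(m*n+n^2) := by ring
      rw [this]; exact dvd_add h (hn.mul_right _)
    · have : m^3 = (m^3 + 2*m^2*n + 3*m*n^2 + n^3) - n*(2*m^2+3*m*n+n^2) := by ring
      rw [this]; exact dvd_sub h (hn.mul_right _)
  have hmn : ¬ (p:ℤ) ∣ (m+n) := by
    intro hmn
    apply hm
    apply hpZ.dvd_of_dvd_pow (n := 3)
    rcases hdvd with h | h | h
    · have : m^3 = -(m^3 + 2*m^2*n + m*n^2 + n^3) + (m+n)*(2*m^2+n^2) := by ring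
      rw [this]; exact dvd_add h.neg_right (hmn.mul_right _)
    · have : m^3 = (m^3 - m*n^2 - n^3) + (m+n)*n^2 := by ring
      rw [this]; exact dvd_add h (hmn.mul_right _)
    · have : m^3 = (m^3 + 2*m^2*n + 3*m*n^2 + n^3) - (m+n)*(2*m*n+n^2) := by ring
      rw [this]; exact dvd_sub h (hmn.mul_right _)
  -- p does not divide B
  have hpB : ¬ (p:ℤ) ∣ B := by
    intro h
    rw [hB, show (4:ℤ)*m^2*n^2*(m+n)^2 = (2*m*n*(m+n))^2 by ring] at h
    have h' := hpZ.dvd_of_dvd_pow h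
    rcases (hpZ.dvd_mul.mp h') with h'' | h''
    · rcases (hpZ.dvd_mul.mp h'') with h3 | h3
      · rcases (hpZ.dvd_mul.mp h3) with h4 | h4
        · exact hp2 h4
        · exact hm h4
      · exact hn h3
    · exact hmn h''
  -- p divides N
  have hpN : (p:ℤ) ∣ N := by
    have hfac : N = (m^3 + 2*m^2*n + m*n^2 + n^3) * ((m^3 - m*n^2 - n^3) *
        ((m^3 + 2*m^2*n + 3*m*n^2 + n^3) *
        (-(m^9+2*m^8*n+m^7*n^2+9*m^6*n^3+19*m^5*n^4) + 26*m^3*n^6+21*m^2*n^7+7*m*n^8+n^9))) := by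
      rw [hN, hA, hB]; ring
    rcases hdvd with h | h | h
    · rw [hfac]; exact h.mul_right _
    · rw [hfac]; exact dvd_mul_of_dvd_right (h.mul_right _) _
    · rw [hfac]
      exact dvd_mul_of_dvd_right (dvd_mul_of_dvd_right (h.mul_right _) _) _
  -- B nonzero
  have hB0 : B ≠ 0 := by
    rw [hB]
    intro h
    apply h0
    have : (4:ℤ)*m^2*n^2*(m+n)^2 = 4*(m*n*(m+n))^2 := by ring
    rw [this] at h
    rcases mul_eq_zero.mp h with h' | h'
    · norm_num at h'
    · exact pow_eq_zero_iff (by norm_num) |>.mp h'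
  -- the rational computation
  show (p:ℤ) ∣ (let c : ℚ := -((A : ℚ) / (B : ℚ)); (c^3 + 2*c^2 + c + 1).num)
  set c : ℚ := -((A : ℚ) / (B : ℚ)) with hc
  set r : ℚ := c^3 + 2*c^2 + c + 1 with hr
  have hBQ : (B : ℚ) ≠ 0 := Int.cast_ne_zero.mpr hB0
  have hrval : r = (N : ℚ) / (B : ℚ)^3 := by
    rw [hr, hc, hN]
    push_cast
    field_simp
    ring
  have hnum : (r.num : ℚ) * (B : ℚ)^3 = (N : ℚ) * (r.den : ℚ) := by
    have hden : (r.den : ℚ) ≠ 0 := by exact_mod_cast r.den_ne_zero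
    have h1 : (r.num : ℚ) / (r.den : ℚ) = (N : ℚ) / (B : ℚ)^3 := by
      rw [Rat.num_div_den r]; exact hrval
    field_simp at h1
    linarith [h1]
  have hnumZ : r.num * B^3 = N * (r.den : ℤ) := by exact_mod_cast hnum
  have : (p:ℤ) ∣ r.num * B^3 := hnumZ ▸ (hpN.mul_right _)
  rcases hpZ.dvd_mul.mp this with h | h
  · exact h
  · exact absurd (hpZ.dvd_of_dvd_pow h) hpB
end

section
/- For all integers m, n with mn(m+n) ≠ 0, none of the six differences t_1(m,n) - t_1(β^i(m,n)) for 1 ≤ i ≤ 5 vanishes, where β(m,n) = (-n, m+n) and t_1(m,n) = m^3+2m^2n+mn^2+n^3; explicitly, these differences equal -2mn^2, 2n(m^2+mn+n^2), 2t_1(m,n), 2(m+n)(m^2+mn+n^2), and 2m^2(m+n) respectively. -/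
/-!
The five differences are polynomial identities. Their factors `m`, `n`, `m + n` are nonzero by
hypothesis, and `m² + mn + n²` is a positive definite form. The remaining factor is `t₁(m, n)`
itself: after dividing out `gcd m n`, a zero `t₁(a, b) = 0` with `a, b` coprime forces `a ∣ b³`
and `b ∣ a³`, so `a, b ∈ {±1}`, and none of these four points is a zero.
-/

lemma sq_add_mul_add_sq_eq_zero_iff {R : Type*} [CommRing R] [LinearOrder R] [IsStrictOrderedRing R]
    {m n : R} : m ^ 2 + m * n + n ^ 2 = 0 ↔ m = 0 ∧ n = 0 := by
  refine ⟨fun h => ?_, fun ⟨hm, hn⟩ => by simp [hm, hn]⟩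
  have hn : n = 0 := by nlinarith [sq_nonneg (2 * m + n), sq_nonneg n]
  subst hn
  simpa using h

lemma Int.cubic_ne_zero_of_isCoprime {a b : ℤ} (hab : IsCoprime a b) :
    a ^ 3 + 2 * a ^ 2 * b + a * b ^ 2 + b ^ 3 ≠ 0 := by
  intro h
  have ha : a ∣ b ^ 3 := ⟨-(a ^ 2 + 2 * a * b + b ^ 2), by linear_combination h⟩
  have hb : b ∣ a ^ 3 := ⟨-(2 * a ^ 2 + a * b + b ^ 2), by linear_combination h⟩
  rcases Int.isUnit_iff.mp ((hab.pow_right (n := 3)).isUnit_of_dvd ha) with rfl | rfl <;>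
    rcases Int.isUnit_iff.mp ((hab.symm.pow_right (n := 3)).isUnit_of_dvd hb) with rfl | rfl <;>
    norm_num at h

lemma Int.cubic_eq_zero_iff {m n : ℤ} :
    m ^ 3 + 2 * m ^ 2 * n + m * n ^ 2 + n ^ 3 = 0 ↔ m = 0 ∧ n = 0 := by
  refine ⟨fun h => ?_, fun ⟨hm, hn⟩ => by simp [hm, hn]⟩
  by_contra hmn
  have hgcd : 0 < Int.gcd m n := Int.gcd_pos_iff.mpr (by tauto)
  obtain ⟨g, a, b, hg, hab, rfl, rfl⟩ := Int.exists_gcd_one' hgcd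
  have hg3 : (g : ℤ) ^ 3 ≠ 0 := by positivity
  refine Int.cubic_ne_zero_of_isCoprime (Int.isCoprime_iff_gcd_eq_one.mpr hab)
    ((mul_eq_zero.mp ?_).resolve_right hg3)
  linear_combination h

theorem t1_beta_differences (m n : ℤ) (h : m*n*(m+n) ≠ 0) :
    (let t1 : ℤ → ℤ → ℤ := fun x y => x^3 + 2*x^2*y + x*y^2 + y^3
     (t1 m n - t1 (-n) (m+n) = -2*m*n^2) ∧
     (t1 m n - t1 (-(m+n)) m = 2*n*(m^2+m*n+n^2)) ∧
     (t1 m n - t1 (-m) (-n) = 2*(t1 m n)) ∧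
     (t1 m n - t1 n (-(m+n)) = 2*(m+n)*(m^2+m*n+n^2)) ∧
     (t1 m n - t1 (m+n) (-m) = 2*m^2*(m+n)) ∧
     (t1 m n - t1 (-n) (m+n) ≠ 0) ∧
     (t1 m n - t1 (-(m+n)) m ≠ 0) ∧
     (t1 m n - t1 (-m) (-n) ≠ 0) ∧
     (t1 m n - t1 n (-(m+n)) ≠ 0) ∧
     (t1 m n - t1 (m+n) (-m) ≠ 0)) := by
  intro t1
  obtain ⟨⟨hm, hn⟩, hmn⟩ : (m ≠ 0 ∧ n ≠ 0) ∧ m + n ≠ 0 := by simpa only [mul_ne_zero_iff] using h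
  have hq : m ^ 2 + m * n + n ^ 2 ≠ 0 := fun h0 => hm (sq_add_mul_add_sq_eq_zero_iff.mp h0).1
  have ht : t1 m n ≠ 0 := fun h0 => hm (Int.cubic_eq_zero_iff.mp h0).1
  have e1 : t1 m n - t1 (-n) (m+n) = -2*m*n^2 := by simp only [t1]; ring
  have e2 : t1 m n - t1 (-(m+n)) m = 2*n*(m^2+m*n+n^2) := by simp only [t1]; ring
  have e3 : t1 m n - t1 (-m) (-n) = 2*(t1 m n) := by simp only [t1]; ring
  have e4 : t1 m n - t1 n (-(m+n)) = 2*(m+n)*(m^2+m*n+n^2) := by simp only [t1]; ring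
  have e5 : t1 m n - t1 (m+n) (-m) = 2*m^2*(m+n) := by simp only [t1]; ring
  refine ⟨e1, e2, e3, e4, e5, ?_, ?_, ?_, ?_, ?_⟩ <;>
    simp only [e1, e2, e3, e4, e5] <;> positivity
end
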